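/- arXiv:2308.14716 — 10 statements merged into one kernel-verified Lean document; each statement's English description precedes it below -/
import Mathlib

section
/- Let f: V→ℝ. If (x,y) and (y,z) are both edges of the 0-violation graph B_{0,f}, then VS_f(x,z) ≥ VS_f(x,y) + VS_f(y,z). -/
/-- The violation score of a pair `(x, y)` with respect to `f`:
`|f x - f y| - dist_G x y` if this is positive, and `0` otherwise. -/
noncomputable def violationScore {V : Type*} (G : SimpleGraph V) (f : V → ℝ) (x y : V) : ℝ :=
  max (|f x - f y| - (G.dist x y : ℝ)) 0

/-- If `(x,y)` and `(y,z)` are edges of the 0-violation graph `B_{0,f}`,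
then `VS_f(x,z) ≥ VS_f(x,y) + VS_f(y,z)`. -/
theorem violationScore_superadditive {V : Type*} [Fintype V]
    (G : SimpleGraph V) (hG : G.Connected) (f : V → ℝ) (x y z : V)
    (hxy : violationScore G f x y > 0 ∧ f x < f y)
    (hyz : violationScore G f y z > 0 ∧ f y < f z) :
    violationScore G f x z ≥ violationScore G f x y + violationScore G f y z := by
  obtain ⟨hv1, h1⟩ := hxy
  obtain ⟨hv2, h2⟩ := hyz
  have a1 : |f x - f y| = f y - f x := by rw [abs_sub_comm]; exact abs_of_pos (by linarith)
  have a2 : |f y - f z| = f z - f y := by rw [abs_sub_comm]; exact abs_of_pos (by linarith)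
  have a3 : |f x - f z| = f z - f x := by rw [abs_sub_comm]; exact abs_of_pos (by linarith)
  have htri : (G.dist x z : ℝ) ≤ (G.dist x y : ℝ) + (G.dist y z : ℝ) := by
    exact_mod_cast hG.dist_triangle
  have d1 : violationScore G f x y = f y - f x - (G.dist x y : ℝ) := by
    unfold violationScore at hv1 ⊢
    rw [a1] at hv1 ⊢
    exact max_eq_left ((lt_max_iff.mp hv1).resolve_right (lt_irrefl 0)).le
  have d2 : violationScore G f y z = f z - f y - (G.dist y z : ℝ) := by
    unfold violationScore at hv2 ⊢
    rw [a2] at hv2 ⊢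
    exact max_eq_left ((lt_max_iff.mp hv2).resolve_right (lt_irrefl 0)).le
  have : violationScore G f x z ≥ f z - f x - (G.dist x z : ℝ) := by
    unfold violationScore; rw [a3]; exact le_max_left _ _
  rw [d1, d2]; linarith
end

section
/- Let h: V→ℝ be Lipschitz, let g: V→ℝ, let Δ > 0, and let x,y ∈ V satisfy g(y) − g(x) > dist_G(x,y) + 2Δ. Define g'(x) = g(x) + Δ and g'(y) = g(y) − Δ. Then |g'(x)−h(x)| + |g'(y)−h(y)| ≤ |g(x)−h(x)| + |g(y)−h(y)|. -/
/-- Moving the values of a heavily violated pair `(x,y)` towards each other by `Δ`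
does not increase the total `ℓ₁` deviation from any Lipschitz function `h`. -/
theorem move_towards_lipschitz {V : Type*} [Fintype V]
    (G : SimpleGraph V) (hG : G.Connected)
    (h : V → ℝ) (hLip : ∀ x y : V, |h x - h y| ≤ (G.dist x y : ℝ))
    (g : V → ℝ) (Δ : ℝ) (hΔ : 0 < Δ) (x y : V)
    (hviol : g y - g x > (G.dist x y : ℝ) + 2 * Δ)
    (g'x g'y : ℝ) (hg'x : g'x = g x + Δ) (hg'y : g'y = g y - Δ) :
    |g'x - h x| + |g'y - h y| ≤ |g x - h x| + |g y - h y| := by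
  have hd := hLip x y
  have h1 : h x - h y ≤ (G.dist x y : ℝ) := (abs_le.mp hd).2
  have h2 : -(G.dist x y : ℝ) ≤ h x - h y := (abs_le.mp hd).1
  subst hg'x hg'y
  rcases abs_cases (g x + Δ - h x) with ⟨e1, _⟩ | ⟨e1, _⟩ <;>
  rcases abs_cases (g y - Δ - h y) with ⟨e2, _⟩ | ⟨e2, _⟩ <;>
  rcases abs_cases (g x - h x) with ⟨e3, _⟩ | ⟨e3, _⟩ <;>
  rcases abs_cases (g y - h y) with ⟨e4, _⟩ | ⟨e4, _⟩ <;>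
  linarith
end

section
/- Let g: V→ℝ, let Δ > 0, and let M be a set of pairs (x,y) of vertices such that all vertices appearing in pairs of M are distinct and g(y) − g(x) > dist_G(x,y) + 2Δ for every (x,y) ∈ M. Define g': V→ℝ by g'(x) = g(x) + Δ and g'(y) = g(y) − Δ for each (x,y) ∈ M, and g'(z) = g(z) for all other z. Then for every Lipschitz function h: V→ℝ, Σ_{z∈V} |g'(z)−h(z)| ≤ Σ_{z∈V} |g(z)−h(z)|. -/
lemma pair_move_aux (a b d : ℝ) (hd : 0 < d) (hab : 2 * d < b - a) :
    |a + d| + |b - d| ≤ |a| + |b| := by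
  rcases abs_cases (a + d) with ⟨e1, _⟩ | ⟨e1, _⟩ <;>
  rcases abs_cases (b - d) with ⟨e2, _⟩ | ⟨e2, _⟩ <;>
  rcases abs_cases a with ⟨e3, _⟩ | ⟨e3, _⟩ <;>
  rcases abs_cases b with ⟨e4, _⟩ | ⟨e4, _⟩ <;>
  linarith

/-- Moving the values of disjoint heavily violated pairs towards each other by `Δ`
does not increase the total `ℓ₁` deviation from any Lipschitz function `h`. -/
theorem matching_move_towards_lipschitz {V : Type*} [Fintype V]
    (G : SimpleGraph V) (hG : G.Connected)
    (g : V → ℝ) (Δ : ℝ) (hΔ : 0 < Δ)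
    (M : Set (V × V))
    (hMviol : ∀ p ∈ M, g p.2 - g p.1 > (G.dist p.1 p.2 : ℝ) + 2 * Δ)
    (hMdisj1 : ∀ p ∈ M, p.1 ≠ p.2)
    (hMdisj : ∀ p ∈ M, ∀ q ∈ M, p ≠ q →
      p.1 ≠ q.1 ∧ p.1 ≠ q.2 ∧ p.2 ≠ q.1 ∧ p.2 ≠ q.2)
    (g' : V → ℝ)
    (hg'M : ∀ p ∈ M, g' p.1 = g p.1 + Δ ∧ g' p.2 = g p.2 - Δ)
    (hg'rest : ∀ z : V, (∀ p ∈ M, z ≠ p.1 ∧ z ≠ p.2) → g' z = g z) :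
    ∀ h : V → ℝ, (∀ x y : V, |h x - h y| ≤ (G.dist x y : ℝ)) →
      ∑ z : V, |g' z - h z| ≤ ∑ z : V, |g z - h z| := by
  classical
  intro h hLip
  rw [← sub_nonpos, ← Finset.sum_sub_distrib]
  set F : V → ℝ := fun z => |g' z - h z| - |g z - h z| with hF
  have hSfin : M.Finite := Set.toFinite M
  set S : Finset (V × V) := hSfin.toFinset with hSdef
  have hmem : ∀ p, p ∈ S ↔ p ∈ M := fun p => hSfin.mem_toFinset
  have key : ∀ p ∈ M, F p.1 + F p.2 ≤ 0 := by
    intro p hp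
    obtain ⟨h1, h2⟩ := hg'M p hp
    have hv := hMviol p hp
    have hL2 : h p.2 - h p.1 ≤ (G.dist p.1 p.2 : ℝ) := by
      have := (abs_le.mp (hLip p.1 p.2)).1
      linarith
    have hba : 2 * Δ < (g p.2 - h p.2) - (g p.1 - h p.1) := by linarith
    have := pair_move_aux (g p.1 - h p.1) (g p.2 - h p.2) Δ hΔ hba
    have e1 : g' p.1 - h p.1 = (g p.1 - h p.1) + Δ := by rw [h1]; ring
    have e2 : g' p.2 - h p.2 = (g p.2 - h p.2) - Δ := by rw [h2]; ring
    simp only [hF, e1, e2]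
    linarith
  have hzero : ∀ z, (∀ p ∈ M, z ≠ p.1 ∧ z ≠ p.2) → F z = 0 := by
    intro z hz
    simp [hF, hg'rest z hz]
  set T : Finset V := S.image Prod.fst ∪ S.image Prod.snd with hT
  have hsub : ∑ z : V, F z = ∑ z ∈ T, F z := by
    refine (Finset.sum_subset (Finset.subset_univ T) ?_).symm
    intro z _ hzT
    apply hzero
    intro p hp
    constructor
    · intro e
      exact hzT (Finset.mem_union_left _
        (Finset.mem_image.mpr ⟨p, (hmem p).mpr hp, e.symm⟩))
    · intro e
      exact hzT (Finset.mem_union_right _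
        (Finset.mem_image.mpr ⟨p, (hmem p).mpr hp, e.symm⟩))
  have hdisj : Disjoint (S.image Prod.fst) (S.image Prod.snd) := by
    rw [Finset.disjoint_left]
    intro z hz1 hz2
    obtain ⟨p, hp, hpz⟩ := Finset.mem_image.mp hz1
    obtain ⟨q, hq, hqz⟩ := Finset.mem_image.mp hz2
    have hpM := (hmem p).mp hp
    have hqM := (hmem q).mp hq
    by_cases hpq : p = q
    · exact hMdisj1 p hpM (by rw [hpz, hpq, hqz])
    · exact (hMdisj p hpM q hqM hpq).2.1 (by rw [hpz, hqz])
  have hinj1 : ∀ x ∈ S, ∀ y ∈ S, x.1 = y.1 → x = y := by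
    intro x hx y hy hxy
    by_contra hne
    exact (hMdisj x ((hmem x).mp hx) y ((hmem y).mp hy) hne).1 hxy
  have hinj2 : ∀ x ∈ S, ∀ y ∈ S, x.2 = y.2 → x = y := by
    intro x hx y hy hxy
    by_contra hne
    exact (hMdisj x ((hmem x).mp hx) y ((hmem y).mp hy) hne).2.2.2 hxy
  rw [hsub, hT, Finset.sum_union hdisj, Finset.sum_image hinj1,
    Finset.sum_image hinj2, ← Finset.sum_add_distrib]
  exact Finset.sum_nonpos fun p hp => key p ((hmem p).mp hp)
end

section
/- Let r ≥ 0, let f: V→[0,r], and let C be a vertex cover of the 0-violation graph B_{0,f} (i.e., every edge of B_{0,f} has at least one endpoint in C) with C ≠ V. Define g_C: V→ℝ by g_C(x) = f(x) for x ∈ V∖C and g_C(u) = max(0, max_{v∈V∖C}(f(v) − dist_G(u,v))) for u ∈ C. Then g_C is Lipschitz, i.e., |g_C(x)−g_C(y)| ≤ dist_G(x,y) for all x,y ∈ V. -/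
/-- Reassigning the values on a vertex cover `C` of the 0-violation graph `B_{0,f}`
by the Lipschitz extension formula `g_C u = max 0 (max_{v ∈ V∖C} (f v − dist_G u v))`
yields a Lipschitz function. -/
theorem global_l0_filter_lipschitz {V : Type*} [Fintype V] [DecidableEq V]
    (G : SimpleGraph V) (hG : G.Connected)
    (r : ℝ) (hr : 0 ≤ r) (f : V → ℝ) (hf : ∀ x, f x ∈ Set.Icc (0 : ℝ) r)
    (C : Finset V)
    (hcover : ∀ x y : V, violationScore G f x y > 0 → f x < f y → x ∈ C ∨ y ∈ C)
    (hCne : Cᶜ.Nonempty)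
    (gC : V → ℝ)
    (hgout : ∀ x ∈ Cᶜ, gC x = f x)
    (hgin : ∀ u ∈ C, gC u = max 0 (Cᶜ.sup' hCne fun v => f v - (G.dist u v : ℝ))) :
    ∀ x y : V, |gC x - gC y| ≤ (G.dist x y : ℝ) := by
  have htri : ∀ a b c : V, (G.dist a c : ℝ) ≤ G.dist a b + G.dist b c := by
    intro a b c
    exact_mod_cast hG.dist_triangle
  have hsymm : ∀ a b : V, (G.dist a b : ℝ) = G.dist b a := by
    intro a b; rw [G.dist_comm]
  have hdnn : ∀ a b : V, (0 : ℝ) ≤ G.dist a b := fun a b => Nat.cast_nonneg _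
  -- key: pairs outside C are not violated
  have key : ∀ x ∈ Cᶜ, ∀ y ∈ Cᶜ, |f x - f y| ≤ (G.dist x y : ℝ) := by
    intro x hx y hy
    by_contra hcon
    push_neg at hcon
    have hne : f x ≠ f y := by
      intro he
      rw [he, sub_self, abs_zero] at hcon
      exact absurd (hdnn x y) (not_le.mpr hcon)
    rw [Finset.mem_compl] at hx hy
    rcases lt_or_gt_of_ne hne with hlt | hgt
    · have hvs : violationScore G f x y > 0 :=
        lt_max_of_lt_left (sub_pos.mpr hcon)
      rcases hcover x y hvs hlt with h' | h'
      · exact hx h'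
      · exact hy h'
    · have hvs : violationScore G f y x > 0 := by
        unfold violationScore
        rw [abs_sub_comm (f y) (f x), hsymm y x]
        exact lt_max_of_lt_left (sub_pos.mpr hcon)
      rcases hcover y x hvs hgt with h' | h'
      · exact hy h'
      · exact hx h'
  -- mixed case
  have mixed : ∀ u ∈ C, ∀ x ∈ Cᶜ, |gC u - gC x| ≤ (G.dist u x : ℝ) := by
    intro u hu x hx
    rw [hgout x hx, hgin u hu, abs_sub_le_iff]
    constructor
    · rw [sub_le_iff_le_add]
      apply max_le
      · have := (hf x).1
        linarith [hdnn u x]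
      · apply Finset.sup'_le
        intro v hv
        have hxv := abs_le.mp (key x hx v hv)
        have h1 := htri x u v
        have h2 := hsymm x u
        linarith [hxv.1]
    · rw [sub_le_iff_le_add]
      have h1 : f x - (G.dist u x : ℝ) ≤ Cᶜ.sup' hCne fun v => f v - (G.dist u v : ℝ) :=
        Finset.le_sup' (fun v => f v - (G.dist u v : ℝ)) hx
      have h2 := le_max_right (0 : ℝ) (Cᶜ.sup' hCne fun v => f v - (G.dist u v : ℝ))
      linarith
  -- both in C
  have inC : ∀ u ∈ C, ∀ w ∈ C, gC u - gC w ≤ (G.dist u w : ℝ) := by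
    intro u hu w hw
    rw [hgin u hu, hgin w hw, sub_le_iff_le_add]
    apply max_le
    · have := le_max_left (0 : ℝ) (Cᶜ.sup' hCne fun v => f v - (G.dist w v : ℝ))
      linarith [hdnn u w]
    · apply Finset.sup'_le
      intro v hv
      have h1 : f v - (G.dist w v : ℝ) ≤ Cᶜ.sup' hCne fun v => f v - (G.dist w v : ℝ) :=
        Finset.le_sup' (fun v => f v - (G.dist w v : ℝ)) hv
      have h2 := htri w u v
      have h3 := le_max_right (0 : ℝ) (Cᶜ.sup' hCne fun v => f v - (G.dist w v : ℝ))
      have h4 := hsymm u w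
      linarith
  intro x y
  by_cases hx : x ∈ C <;> by_cases hy : y ∈ C
  · rw [abs_sub_le_iff]
    refine ⟨inC x hx y hy, ?_⟩
    rw [hsymm x y]
    exact inC y hy x hx
  · exact mixed x hx y (Finset.mem_compl.mpr hy)
  · rw [abs_sub_comm, hsymm x y]
    exact mixed y hy x (Finset.mem_compl.mpr hx)
  · rw [hgout x (Finset.mem_compl.mpr hx), hgout y (Finset.mem_compl.mpr hy)]
    exact key x (Finset.mem_compl.mpr hx) y (Finset.mem_compl.mpr hy)
end

section
/- For every finite connected undirected graph G = (V,E) with |V| = n and every function f: V→ℝ, the minimum size of a vertex cover of the 0-violation graph B_{0,f} equals the minimum, over all Lipschitz functions g: V→ℝ, of |{x ∈ V : f(x) ≠ g(x)}| (equivalently, it equals n·ℓ₀(f, Lip(G))). -/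
/-- The minimum size of a vertex cover of the 0-violation graph `B_{0,f}` equals the
minimum, over Lipschitz functions `g`, of the number of points where `f` and `g` disagree
(i.e., `n · ℓ₀(f, Lip(G))`). -/
theorem min_vertex_cover_eq_l0_distance {V : Type*} [Fintype V]
    (G : SimpleGraph V) (hG : G.Connected) (f : V → ℝ) :
    sInf {n : ℕ | ∃ C : Set V,
        (∀ x y : V, violationScore G f x y > 0 → f x < f y → x ∈ C ∨ y ∈ C) ∧
        C.ncard = n} =
    sInf {n : ℕ | ∃ g : V → ℝ,
        (∀ x y : V, |g x - g y| ≤ (G.dist x y : ℝ)) ∧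
        {x : V | f x ≠ g x}.ncard = n} := by
  classical
  set A := {n : ℕ | ∃ C : Set V,
        (∀ x y : V, violationScore G f x y > 0 → f x < f y → x ∈ C ∨ y ∈ C) ∧
        C.ncard = n} with hA
  set B := {n : ℕ | ∃ g : V → ℝ,
        (∀ x y : V, |g x - g y| ≤ (G.dist x y : ℝ)) ∧
        {x : V | f x ≠ g x}.ncard = n} with hB
  have hAne : A.Nonempty := ⟨_, Set.univ, fun x y _ _ => Or.inl (Set.mem_univ x), rfl⟩
  have hBne : B.Nonempty := ⟨_, fun _ => 0, fun x y => by simp, rfl⟩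
  apply le_antisymm
  · -- given Lipschitz g, the disagreement set is a vertex cover
    obtain ⟨g, hg, hcard⟩ := Nat.sInf_mem hBne
    refine le_trans (Nat.sInf_le ⟨{x | f x ≠ g x}, ?_, rfl⟩) (le_of_eq hcard)
    intro x y hvs _
    by_contra h
    push_neg at h
    obtain ⟨hx, hy⟩ := h
    simp only [Set.mem_setOf_eq, not_not] at hx hy
    have h1 : 0 < |f x - f y| - (G.dist x y : ℝ) := by
      rcases lt_max_iff.mp hvs with h | h
      · exact h
      · exact absurd h (lt_irrefl 0)
    rw [hx, hy] at h1
    linarith [hg x y]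
  · -- given a cover C, build a Lipschitz g agreeing with f off C
    obtain ⟨C, hC, hcard⟩ := Nat.sInf_mem hAne
    -- key: f is Lipschitz on Cᶜ
    have key : ∀ x y : V, x ∉ C → y ∉ C → |f x - f y| ≤ (G.dist x y : ℝ) := by
      intro x y hx hy
      by_contra hcon
      push_neg at hcon
      have hvs : violationScore G f x y > 0 := lt_max_iff.mpr (Or.inl (by linarith))
      rcases lt_trichotomy (f x) (f y) with hlt | heq | hgt
      · rcases hC x y hvs hlt with h | h
        · exact hx h
        · exact hy h
      · rw [heq] at hcon
        simp at hcon
        have : (0:ℝ) ≤ (G.dist x y : ℝ) := by positivity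
        exact absurd hcon this.not_gt
      · have hvs' : violationScore G f y x > 0 := by
          rw [violationScore, abs_sub_comm, G.dist_comm]
          exact hvs
        rcases hC y x hvs' hgt with h | h
        · exact hy h
        · exact hx h
    by_cases hS : (Cᶜ : Set V).Nonempty
    · haveI : Nonempty ↥(Cᶜ : Set V) := hS.to_subtype
      set g : V → ℝ := fun x => ⨅ z : ↥(Cᶜ : Set V), (f z + (G.dist x z : ℝ)) with hgdef
      have hbdd : ∀ x : V, BddBelow (Set.range fun z : ↥(Cᶜ : Set V) => f z + (G.dist x z : ℝ)) :=
        fun x => (Set.finite_range _).bddBelow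
      have hgle : ∀ (x : V) (z : ↥(Cᶜ : Set V)), g x ≤ f z + (G.dist x z : ℝ) :=
        fun x z => ciInf_le (hbdd x) z
      have hattain : ∀ x : V, ∃ z : ↥(Cᶜ : Set V), g x = f z + (G.dist x z : ℝ) := by
        intro x
        obtain ⟨z, hz⟩ := Finite.exists_min (fun z : ↥(Cᶜ : Set V) => f z + (G.dist x z : ℝ))
        exact ⟨z, le_antisymm (hgle x z) (le_ciInf hz)⟩
      have hagree : ∀ y : V, y ∉ C → g y = f y := by
        intro y hy
        apply le_antisymm
        · have := hgle y ⟨y, hy⟩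
          simpa [SimpleGraph.dist_self] using this
        · apply le_ciInf
          intro z
          have := key y z hy z.2
          have h2 : f y - f z ≤ |f y - f z| := le_abs_self _
          linarith
      have hlip1 : ∀ x y : V, g x ≤ g y + (G.dist x y : ℝ) := by
        intro x y
        obtain ⟨z, hz⟩ := hattain y
        have h1 : g x ≤ f z + (G.dist x z : ℝ) := hgle x z
        have htri : (G.dist x z : ℕ) ≤ G.dist x y + G.dist y z :=
          hG.dist_triangle
        have htri' : (G.dist x z : ℝ) ≤ (G.dist x y : ℝ) + (G.dist y z : ℝ) := by
          exact_mod_cast htri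
        rw [hz]
        linarith
      have hlip : ∀ x y : V, |g x - g y| ≤ (G.dist x y : ℝ) := by
        intro x y
        rw [abs_sub_le_iff]
        constructor
        · linarith [hlip1 x y]
        · have := hlip1 y x
          rw [show G.dist y x = G.dist x y from SimpleGraph.dist_comm] at this
          linarith
      have hsub : {x : V | f x ≠ g x} ⊆ C := by
        intro x hx
        by_contra hxc
        exact hx (hagree x hxc).symm
      calc sInf B ≤ {x : V | f x ≠ g x}.ncard := Nat.sInf_le ⟨g, hlip, rfl⟩
        _ ≤ C.ncard := Set.ncard_le_ncard hsub (Set.toFinite C)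
        _ = sInf A := hcard
    · -- C = univ
      have hCuniv : C = Set.univ := by
        rw [Set.not_nonempty_iff_eq_empty] at hS
        rw [← Set.compl_empty, ← hS, compl_compl]
      calc sInf B ≤ {x : V | f x ≠ (fun _ => (0:ℝ)) x}.ncard :=
            Nat.sInf_le ⟨fun _ => 0, fun x y => by simp, rfl⟩
        _ ≤ C.ncard := Set.ncard_le_ncard (by rw [hCuniv]; exact Set.subset_univ _) (Set.toFinite C)
        _ = sInf A := hcard
end

section
/- Let d, m, r be positive integers with r even and 4 ≤ r ≤ 2^{−16}·d. Let a_1,…,a_m, a'_1,…,a'_m ∈ {0,1}^d satisfy: hammingDist(a_i, a_j) > d/4 for all i ≠ j, and hammingDist(a_i, a'_i) = r for every i. Then: (a) the open Hamming balls of radius r/2 around the 2m points a_1,…,a_m,a'_1,…,a'_m are pairwise disjoint; and (b) the function f: {0,1}^d→[0,r] defined by f(x) = hammingDist(x, a_i) if hammingDist(x, a_i) < r/2 for some i, f(x) = r − hammingDist(x, a'_i) otherwise if hammingDist(x, a'_i) < r/2 for some i, and f(x) = r/2 otherwise, is well defined and Lipschitz with respect to Hamming distance, i.e., |f(x)−f(y)|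 ≤ hammingDist(x,y) for all x,y ∈ {0,1}^d. -/
/-- Positive instance construction for the distribution-free lower bound: if the anchor
points `a_i` are pairwise at Hamming distance more than `d/4` and each `a'_i` is at
distance exactly `r` from `a_i`, then (a) the open Hamming balls of radius `r/2` around
the `2m` anchor points are pairwise disjoint, and (b) the function equal to
`dist(x, a_i)` near `a_i`, to `r − dist(x, a'_i)` near `a'_i`, and to `r/2` elsewhere
is well defined, takes values in `[0,r]`, and is Lipschitz w.r.t. Hamming distance. -/
theorem anchor_construction_positive (d m r : ℕ)
    (hd : 0 < d) (hm : 0 < m) (hr4 : 4 ≤ r) (hreven : Even r)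
    (hrd : (r : ℝ) ≤ (d : ℝ) / 2 ^ 16)
    (a a' : Fin m → (Fin d → Bool))
    (hfar : ∀ i j : Fin m, i ≠ j → (d : ℝ) / 4 < (hammingDist (a i) (a j) : ℝ))
    (hdist : ∀ i : Fin m, hammingDist (a i) (a' i) = r) :
    (∀ s t : Fin m ⊕ Fin m, s ≠ t →
      Disjoint {y : Fin d → Bool | (hammingDist (Sum.elim a a' s) y : ℝ) < (r : ℝ) / 2}
               {y : Fin d → Bool | (hammingDist (Sum.elim a a' t) y : ℝ) < (r : ℝ) / 2}) ∧
    ∃ f : (Fin d → Bool) → ℝ,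
      (∀ i : Fin m, ∀ x : Fin d → Bool,
        (hammingDist x (a i) : ℝ) < (r : ℝ) / 2 → f x = (hammingDist x (a i) : ℝ)) ∧
      (∀ i : Fin m, ∀ x : Fin d → Bool,
        (∀ j : Fin m, ¬ ((hammingDist x (a j) : ℝ) < (r : ℝ) / 2)) →
        (hammingDist x (a' i) : ℝ) < (r : ℝ) / 2 →
        f x = (r : ℝ) - (hammingDist x (a' i) : ℝ)) ∧
      (∀ x : Fin d → Bool,
        (∀ j : Fin m, ¬ ((hammingDist x (a j) : ℝ) < (r : ℝ) / 2)) →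
        (∀ j : Fin m, ¬ ((hammingDist x (a' j) : ℝ) < (r : ℝ) / 2)) →
        f x = (r : ℝ) / 2) ∧
      (∀ x : Fin d → Bool, f x ∈ Set.Icc (0 : ℝ) (r : ℝ)) ∧
      (∀ x y : Fin d → Bool, |f x - f y| ≤ (hammingDist x y : ℝ)) := by
  haveI : Nonempty (Fin m) := ⟨⟨0, hm⟩⟩
  -- basic facts
  have hr0 : (0:ℝ) < r := by positivity
  have hrn : ∀ x y : Fin d → Bool, (0:ℝ) ≤ (hammingDist x y : ℝ) := fun x y =>
    Nat.cast_nonneg _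
  have tri : ∀ x y z : Fin d → Bool,
      (hammingDist x z : ℝ) ≤ (hammingDist x y : ℝ) + (hammingDist y z : ℝ) := by
    intro x y z
    exact_mod_cast hammingDist_triangle x y z
  have hcomm : ∀ x y : Fin d → Bool, (hammingDist x y : ℝ) = (hammingDist y x : ℝ) := by
    intro x y; rw [hammingDist_comm]
  have hr3 : 3 * (r:ℝ) ≤ (d:ℝ) / 4 := by
    have h0 : (0:ℝ) ≤ (d:ℝ) := Nat.cast_nonneg d
    have h2 : (2:ℝ)^16 = 65536 := by norm_num
    rw [h2] at hrd
    linarith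
  -- separation of the 2m anchor points
  have hsep : ∀ s t : Fin m ⊕ Fin m, s ≠ t →
      (r : ℝ) ≤ (hammingDist (Sum.elim a a' s) (Sum.elim a a' t) : ℝ) := by
    intro s t hst
    have hdr : ∀ i : Fin m, (hammingDist (a i) (a' i) : ℝ) = (r:ℝ) := by
      intro i; exact_mod_cast congrArg (Nat.cast : ℕ → ℝ) (hdist i)
    cases s with
    | inl i =>
      cases t with
      | inl j =>
        have hij : i ≠ j := fun h => hst (by rw [h])
        have := hfar i j hij
        simp only [Sum.elim_inl]
        linarith
      | inr j =>
        simp only [Sum.elim_inl, Sum.elim_inr]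
        by_cases hij : i = j
        · subst hij; rw [hdr i]
        · have h1 := hfar i j hij
          have h2 := tri (a i) (a' j) (a j)
          have h3 : (hammingDist (a' j) (a j) : ℝ) = r := by rw [hcomm]; exact hdr j
          linarith
    | inr i =>
      cases t with
      | inl j =>
        simp only [Sum.elim_inl, Sum.elim_inr]
        by_cases hij : i = j
        · subst hij; rw [hcomm]; rw [hdr i]
        · have h1 := hfar i j hij
          have h2 := tri (a i) (a' i) (a j)
          have h3 := hcomm (a' i) (a j)
          have h4 := hdr i
          linarith
      | inr j =>
        have hij : i ≠ j := fun h => hst (by rw [h])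
        simp only [Sum.elim_inr]
        have h1 := hfar i j hij
        have h2 := tri (a i) (a' i) (a j)
        have h3 := tri (a' i) (a' j) (a j)
        have h4 : (hammingDist (a' j) (a j) : ℝ) = r := by rw [hcomm]; exact hdr j
        have h5 := hdr i
        linarith
  constructor
  · -- disjointness
    intro s t hst
    rw [Set.disjoint_left]
    intro y hy1 hy2
    simp only [Set.mem_setOf_eq] at hy1 hy2
    have h1 := hsep s t hst
    have h2 := tri (Sum.elim a a' s) y (Sum.elim a a' t)
    have h3 := hcomm y (Sum.elim a a' t)
    linarith
  · -- the function
    set A : (Fin d → Bool) → ℝ :=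
      fun x => Finset.univ.inf' Finset.univ_nonempty (fun i => (hammingDist x (a i) : ℝ))
      with hA
    set A' : (Fin d → Bool) → ℝ :=
      fun x => Finset.univ.inf' Finset.univ_nonempty (fun i => (hammingDist x (a' i) : ℝ))
      with hA'
    have hAle : ∀ (x : Fin d → Bool) (i : Fin m), A x ≤ (hammingDist x (a i) : ℝ) := by
      intro x i; exact Finset.inf'_le _ (Finset.mem_univ i)
    have hleA : ∀ (x : Fin d → Bool) (b : ℝ), (∀ i, b ≤ (hammingDist x (a i) : ℝ)) → b ≤ A x := by
      intro x b hb; exact Finset.le_inf' _ _ (fun i _ => hb i)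
    have hA'le : ∀ (x : Fin d → Bool) (i : Fin m), A' x ≤ (hammingDist x (a' i) : ℝ) := by
      intro x i; exact Finset.inf'_le _ (Finset.mem_univ i)
    have hleA' : ∀ (x : Fin d → Bool) (b : ℝ), (∀ i, b ≤ (hammingDist x (a' i) : ℝ)) → b ≤ A' x := by
      intro x b hb; exact Finset.le_inf' _ _ (fun i _ => hb i)
    have hA0 : ∀ x, 0 ≤ A x := fun x => hleA x 0 (fun i => hrn _ _)
    have hA'0 : ∀ x, 0 ≤ A' x := fun x => hleA' x 0 (fun i => hrn _ _)
    have hAlip : ∀ x y : Fin d → Bool, |A x - A y| ≤ (hammingDist x y : ℝ) := by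
      intro x y
      rw [abs_sub_le_iff]
      constructor
      · have : A x - (hammingDist x y : ℝ) ≤ A y := by
          apply hleA
          intro i
          have := tri x y (a i)
          have := hAle x i
          linarith
        linarith
      · have : A y - (hammingDist x y : ℝ) ≤ A x := by
          apply hleA
          intro i
          have h1 := tri y x (a i)
          have h2 := hAle y i
          have h3 := hcomm y x
          linarith
        linarith
    have hA'lip : ∀ x y : Fin d → Bool, |A' x - A' y| ≤ (hammingDist x y : ℝ) := by
      intro x y
      rw [abs_sub_le_iff]
      constructor
      · have : A' x - (hammingDist x y : ℝ) ≤ A' y := by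
          apply hleA'
          intro i
          have := tri x y (a' i)
          have := hA'le x i
          linarith
        linarith
      · have : A' y - (hammingDist x y : ℝ) ≤ A' x := by
          apply hleA'
          intro i
          have h1 := tri y x (a' i)
          have h2 := hA'le y i
          have h3 := hcomm y x
          linarith
        linarith
    refine ⟨fun x => min (A x) (max ((r:ℝ)/2) ((r:ℝ) - A' x)), ?_, ?_, ?_, ?_, ?_⟩
    · -- near a i
      intro i x hx
      show min (A x) (max ((r:ℝ)/2) ((r:ℝ) - A' x)) = _
      have hAx : A x = (hammingDist x (a i) : ℝ) := by
        apply le_antisymm (hAle x i)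
        apply hleA
        intro j
        by_cases hij : j = i
        · subst hij; exact le_rfl
        · have h1 := hfar i j (fun h => hij h.symm)
          have h2 := tri (a i) x (a j)
          have h3 := hcomm (a i) x
          linarith
      rw [hAx, min_eq_left]
      exact le_trans (le_of_lt hx) (le_max_left _ _)
    · -- near a' i
      intro i x hno hx
      show min (A x) (max ((r:ℝ)/2) ((r:ℝ) - A' x)) = _
      have hA'x : A' x = (hammingDist x (a' i) : ℝ) := by
        apply le_antisymm (hA'le x i)
        apply hleA'
        intro j
        by_cases hij : j = i
        · subst hij; exact le_rfl
        · -- hd(a' i, a' j) ≥ d/4 - 2r ≥ r, so hd x (a' j) ≥ r/2 > hd x (a' i)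
          have h1 := hfar i j (fun h => hij h.symm)
          have h2 := tri (a i) (a' i) (a j)
          have h3 := tri (a' i) (a' j) (a j)
          have h4 : (hammingDist (a' j) (a j) : ℝ) = r := by
            rw [hcomm]; exact_mod_cast congrArg (Nat.cast : ℕ → ℝ) (hdist j)
          have h5 : (hammingDist (a i) (a' i) : ℝ) = r := by
            exact_mod_cast congrArg (Nat.cast : ℕ → ℝ) (hdist i)
          have h6 := tri (a' i) x (a' j)
          have h7 := hcomm (a' i) x
          linarith
      have hBx : max ((r:ℝ)/2) ((r:ℝ) - A' x) = (r:ℝ) - (hammingDist x (a' i) : ℝ) := by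
        rw [hA'x, max_eq_right]
        linarith
      rw [hBx, min_eq_right]
      -- need A x ≥ r - hd x (a' i)
      apply hleA
      intro j
      by_cases hij : j = i
      · subst hij
        have h1 := tri (a j) x (a' j)
        have h2 : (hammingDist (a j) (a' j) : ℝ) = r := by
          exact_mod_cast congrArg (Nat.cast : ℕ → ℝ) (hdist j)
        have h4 := hcomm (a j) x
        linarith
      · have h1 := hfar i j (fun h => hij h.symm)
        have h2 := tri (a i) (a' i) (a j)
        have h3 := tri (a' i) x (a j)
        have h4 : (hammingDist (a i) (a' i) : ℝ) = r := by
          exact_mod_cast congrArg (Nat.cast : ℕ → ℝ) (hdist i)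
        have h5 := hcomm (a' i) x
        have h6 := hcomm (a j) x
        linarith
    · -- far from everything
      intro x hno hno'
      show min (A x) (max ((r:ℝ)/2) ((r:ℝ) - A' x)) = _
      have h1 : (r:ℝ)/2 ≤ A x := by
        apply hleA; intro j; exact le_of_not_gt (hno j)
      have h2 : (r:ℝ)/2 ≤ A' x := by
        apply hleA'; intro j; exact le_of_not_gt (hno' j)
      rw [max_eq_left (by linarith), min_eq_right h1]
    · -- range
      intro x
      show min (A x) (max ((r:ℝ)/2) ((r:ℝ) - A' x)) ∈ _
      rw [Set.mem_Icc]
      constructor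
      · apply le_min (hA0 x)
        exact le_trans (by linarith) (le_max_left _ _)
      · apply le_trans (min_le_right _ _)
        apply max_le (by linarith)
        have := hA'0 x
        linarith
    · -- Lipschitz
      intro x y
      show |min (A x) (max ((r:ℝ)/2) ((r:ℝ) - A' x)) - min (A y) (max ((r:ℝ)/2) ((r:ℝ) - A' y))| ≤ _
      apply le_trans (abs_min_sub_min_le_max _ _ _ _)
      apply max_le (hAlip x y)
      apply le_trans (abs_max_sub_max_le_max _ _ _ _)
      apply max_le
      · simp [hrn x y]
      · have h : (r:ℝ) - A' x - ((r:ℝ) - A' y) = -(A' x - A' y) := by ring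
        rw [h, abs_neg]
        exact hA'lip x y
end

section
/- Let d, m, r be positive integers with r even and 4 ≤ r ≤ 2^{−16}·d. Let a_1,…,a_m, a'_1,…,a'_m ∈ {0,1}^d satisfy: hammingDist(a_i, a_j) > d/4 for all i ≠ j, and hammingDist(a_i, a'_i) = r − 1 for every i. Define f: {0,1}^d→[0,r] by f(x) = hammingDist(x, a_i) if hammingDist(x, a_i) < r/2 for some i, f(x) = r − hammingDist(x, a'_i) otherwise if hammingDist(x, a'_i) < r/2 for some i, and f(x) = r/2 otherwise. Then f is well defined, f(a_i) = 0 and f(a'_i) = r for every i, every pair (a_i, a'_i) is violated (since |f(a_i)−f(a'_i)| = r > r−1 = hammingDist(a_i,a'_i)), and every Lipschitz function g: {0,1}^d→ℝ differs from f on at least m of the 2m anchor points; consequently, if U is the uniform distribution on the 2m anchor points, then min over Lipschitz g of Pr_{u∼U}[f(u) ≠ g(u)] is at least 1/2. -/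
/-- Negative instance construction for the distribution-free lower bound: if the anchor
points `a_i` are pairwise at Hamming distance more than `d/4` and each `a'_i` is at
distance exactly `r−1` from `a_i`, then the function equal to `dist(x, a_i)` near `a_i`,
to `r − dist(x, a'_i)` near `a'_i`, and to `r/2` elsewhere is well defined, satisfies
`f(a_i) = 0` and `f(a'_i) = r`, every pair `(a_i, a'_i)` is violated, and every Lipschitz
`g` differs from `f` on at least `m` of the `2m` anchor points; hence for the uniform
distribution `U` on the anchor points, `Pr_{u∼U}[f(u) ≠ g(u)] ≥ 1/2`. -/
theorem anchor_construction_negative (d m r : ℕ)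
    (hd : 0 < d) (hm : 0 < m) (hr4 : 4 ≤ r) (hreven : Even r)
    (hrd : (r : ℝ) ≤ (d : ℝ) / 2 ^ 16)
    (a a' : Fin m → (Fin d → Bool))
    (hfar : ∀ i j : Fin m, i ≠ j → (d : ℝ) / 4 < (hammingDist (a i) (a j) : ℝ))
    (hdist : ∀ i : Fin m, hammingDist (a i) (a' i) = r - 1) :
    ∃ f : (Fin d → Bool) → ℝ,
      (∀ i : Fin m, ∀ x : Fin d → Bool,
        (hammingDist x (a i) : ℝ) < (r : ℝ) / 2 → f x = (hammingDist x (a i) : ℝ)) ∧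
      (∀ i : Fin m, ∀ x : Fin d → Bool,
        (∀ j : Fin m, ¬ ((hammingDist x (a j) : ℝ) < (r : ℝ) / 2)) →
        (hammingDist x (a' i) : ℝ) < (r : ℝ) / 2 →
        f x = (r : ℝ) - (hammingDist x (a' i) : ℝ)) ∧
      (∀ x : Fin d → Bool,
        (∀ j : Fin m, ¬ ((hammingDist x (a j) : ℝ) < (r : ℝ) / 2)) →
        (∀ j : Fin m, ¬ ((hammingDist x (a' j) : ℝ) < (r : ℝ) / 2)) →
        f x = (r : ℝ) / 2) ∧
      (∀ x : Fin d → Bool, f x ∈ Set.Icc (0 : ℝ) (r : ℝ)) ∧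
      (∀ i : Fin m, f (a i) = 0 ∧ f (a' i) = (r : ℝ)) ∧
      (∀ i : Fin m, |f (a i) - f (a' i)| > (hammingDist (a i) (a' i) : ℝ)) ∧
      (∀ g : (Fin d → Bool) → ℝ,
        (∀ x y : Fin d → Bool, |g x - g y| ≤ (hammingDist x y : ℝ)) →
        m ≤ {i : Fin m | f (a i) ≠ g (a i)}.ncard +
              {i : Fin m | f (a' i) ≠ g (a' i)}.ncard ∧
        (1 : ℝ) / 2 ≤
          (({i : Fin m | f (a i) ≠ g (a i)}.ncard +
              {i : Fin m | f (a' i) ≠ g (a' i)}.ncard : ℕ) : ℝ) / (2 * m)) := by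
  classical
  have hr1 : (1:ℕ) ≤ r := by omega
  have hrR : (4:ℝ) ≤ r := by exact_mod_cast hr4
  have hdR : (0:ℝ) < d := by exact_mod_cast hd
  have hdistR : ∀ i, (hammingDist (a i) (a' i) : ℝ) = (r:ℝ) - 1 := by
    intro i
    rw [hdist i]
    push_cast [Nat.cast_sub hr1]
    ring
  -- uniqueness near a's
  have uniq1 : ∀ (x : Fin d → Bool) (i j : Fin m),
      (hammingDist x (a i) : ℝ) < (r:ℝ)/2 → (hammingDist x (a j) : ℝ) < (r:ℝ)/2 → i = j := by
    intro x i j hi hj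
    by_contra hne
    have h1 := hfar i j hne
    have htri : (hammingDist (a i) (a j) : ℝ) ≤ hammingDist (a i) x + hammingDist x (a j) := by
      exact_mod_cast hammingDist_triangle (a i) x (a j)
    rw [hammingDist_comm (a i) x] at htri
    linarith
  have uniq2 : ∀ (x : Fin d → Bool) (i j : Fin m),
      (hammingDist x (a' i) : ℝ) < (r:ℝ)/2 → (hammingDist x (a' j) : ℝ) < (r:ℝ)/2 → i = j := by
    intro x i j hi hj
    by_contra hne
    have h1 := hfar i j hne
    have t1 : (hammingDist (a i) (a j) : ℝ) ≤ hammingDist (a i) (a' i) + hammingDist (a' i) x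
        + (hammingDist x (a' j) + hammingDist (a' j) (a j)) := by
      have u1 : hammingDist (a i) (a j) ≤ hammingDist (a i) (a' i) + hammingDist (a' i) (a j) :=
        hammingDist_triangle _ _ _
      have u2 : hammingDist (a' i) (a j) ≤ hammingDist (a' i) x + hammingDist x (a j) :=
        hammingDist_triangle _ _ _
      have u3 : hammingDist x (a j) ≤ hammingDist x (a' j) + hammingDist (a' j) (a j) :=
        hammingDist_triangle _ _ _
      push_cast
      have := le_trans u1 (by omega : hammingDist (a i) (a' i) + hammingDist (a' i) (a j)
        ≤ hammingDist (a i) (a' i) + hammingDist (a' i) x + (hammingDist x (a' j) + hammingDist (a' j) (a j)))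
      exact_mod_cast this
    rw [hammingDist_comm (a' i) x] at t1
    rw [hammingDist_comm (a' j) (a j), hdistR i, hdistR j] at t1
    linarith
  set P : (Fin d → Bool) → Prop := fun x => ∃ i, (hammingDist x (a i) : ℝ) < (r:ℝ)/2 with hP
  set Q : (Fin d → Bool) → Prop := fun x => ∃ i, (hammingDist x (a' i) : ℝ) < (r:ℝ)/2 with hQ
  set f : (Fin d → Bool) → ℝ := fun x =>
    if h : P x then (hammingDist x (a h.choose) : ℝ)
    else if h' : Q x then (r:ℝ) - (hammingDist x (a' h'.choose) : ℝ)
    else (r:ℝ)/2 with hf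
  have c1 : ∀ i x, (hammingDist x (a i) : ℝ) < (r:ℝ)/2 → f x = (hammingDist x (a i) : ℝ) := by
    intro i x hx
    have hPx : P x := ⟨i, hx⟩
    simp only [hf, dif_pos hPx]
    rw [uniq1 x hPx.choose i hPx.choose_spec hx]
  have c2 : ∀ i x, (∀ j, ¬ ((hammingDist x (a j) : ℝ) < (r:ℝ)/2)) →
      (hammingDist x (a' i) : ℝ) < (r:ℝ)/2 → f x = (r:ℝ) - (hammingDist x (a' i) : ℝ) := by
    intro i x hnx hx
    have hPx : ¬ P x := by rintro ⟨j, hj⟩; exact hnx j hj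
    have hQx : Q x := ⟨i, hx⟩
    simp only [hf, dif_neg hPx, dif_pos hQx]
    rw [uniq2 x hQx.choose i hQx.choose_spec hx]
  have c3 : ∀ x, (∀ j, ¬ ((hammingDist x (a j) : ℝ) < (r:ℝ)/2)) →
      (∀ j, ¬ ((hammingDist x (a' j) : ℝ) < (r:ℝ)/2)) → f x = (r:ℝ)/2 := by
    intro x h1 h2
    have hPx : ¬ P x := by rintro ⟨j, hj⟩; exact h1 j hj
    have hQx : ¬ Q x := by rintro ⟨j, hj⟩; exact h2 j hj
    simp only [hf, dif_neg hPx, dif_neg hQx]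
  have range : ∀ x, f x ∈ Set.Icc (0:ℝ) (r:ℝ) := by
    intro x
    simp only [hf]
    split_ifs with h h'
    · have := h.choose_spec
      constructor
      · positivity
      · linarith
    · have := h'.choose_spec
      have h0 : (0:ℝ) ≤ (hammingDist x (a' h'.choose) : ℝ) := by positivity
      constructor <;> linarith
    · constructor <;> linarith
  -- f (a i) = 0
  have fa : ∀ i, f (a i) = 0 := by
    intro i
    have h0 : (hammingDist (a i) (a i) : ℝ) < (r:ℝ)/2 := by
      simp [hammingDist_self]; linarith
    rw [c1 i (a i) h0]
    simp [hammingDist_self]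
  -- a' i is far from all a j
  have ha'far : ∀ i j, ¬ ((hammingDist (a' i) (a j) : ℝ) < (r:ℝ)/2) := by
    intro i j
    by_cases hij : i = j
    · subst hij
      rw [hammingDist_comm, hdistR i]
      linarith
    · intro hlt
      have h1 := hfar i j hij
      have t : (hammingDist (a i) (a j) : ℝ) ≤ hammingDist (a i) (a' i) + hammingDist (a' i) (a j) := by
        exact_mod_cast hammingDist_triangle (a i) (a' i) (a j)
      rw [hdistR i] at t
      linarith
  have fa' : ∀ i, f (a' i) = (r:ℝ) := by
    intro i
    have h0 : (hammingDist (a' i) (a' i) : ℝ) < (r:ℝ)/2 := by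
      simp [hammingDist_self]; linarith
    rw [c2 i (a' i) (ha'far i) h0]
    simp [hammingDist_self]
  refine ⟨f, c1, c2, c3, range, fun i => ⟨fa i, fa' i⟩, ?_, ?_⟩
  · intro i
    rw [fa i, fa' i, hdistR i]
    rw [abs_of_nonpos (by linarith)]
    linarith
  · intro g hg
    have key : ∀ i : Fin m, f (a i) ≠ g (a i) ∨ f (a' i) ≠ g (a' i) := by
      intro i
      by_contra h
      push_neg at h
      obtain ⟨h1, h2⟩ := h
      have := hg (a i) (a' i)
      rw [← h1, ← h2, fa i, fa' i, hdistR i, abs_of_nonpos (by linarith)] at this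
      linarith
    set S1 := {i : Fin m | f (a i) ≠ g (a i)}
    set S2 := {i : Fin m | f (a' i) ≠ g (a' i)}
    have hsub : (Set.univ : Set (Fin m)) ⊆ S1 ∪ S2 := by
      intro i _
      rcases key i with h | h
      · exact Or.inl h
      · exact Or.inr h
    have h1 : m ≤ S1.ncard + S2.ncard := by
      calc m = (Set.univ : Set (Fin m)).ncard := by
              rw [Set.ncard_univ]; simp
        _ ≤ (S1 ∪ S2).ncard := Set.ncard_le_ncard hsub (Set.toFinite _)
        _ ≤ S1.ncard + S2.ncard := Set.ncard_union_le _ _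
    refine ⟨h1, ?_⟩
    have hmR : (0:ℝ) < 2 * m := by positivity
    rw [div_le_div_iff₀ (by norm_num) hmR]
    have : (m:ℝ) ≤ (S1.ncard + S2.ncard : ℕ) := by exact_mod_cast h1
    linarith
end

section
/- Let d be a positive integer and let m be a positive integer with m ≤ 2^{d/64}. If A_1, …, A_m are independent uniformly random points in {0,1}^d, then the probability that there exist distinct indices i, j with hammingDist(A_i, A_j) ≤ d/4 is at most 2^{−d/32}. -/
/-!
Union bound over ordered pairs `i ≠ j`: for each pair, `(A i, A j)` is a uniform pair of points,
and by an exponential-moment bound (`∑ y, 2^{-dist(x, y)} = (3/2)^d`) a uniform pair is within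
distance `d/4` with probability at most `2^{d/4} (3/4)^d ≤ 2^{-d/12}`. With at most
`m² ≤ 2^{d/32}` pairs, the total is at most `2^{d/32 - d/12} ≤ 2^{-d/32}`.
-/

open Finset Fintype

section HammingBall

variable {ι : Type*} [Fintype ι] [DecidableEq ι]

theorem sum_pow_hammingDist (x : ι → Bool) (t : ℝ) :
    ∑ y : ι → Bool, t ^ hammingDist x y = (1 + t) ^ card ι := by
  have (y : ι → Bool) : t ^ hammingDist x y = ∏ i, if x i ≠ y i then t else 1 := by
    rw [hammingDist, ← prod_filter, prod_const]
  simp_rw [this, ← Fintype.prod_sum (fun i b => if x i ≠ b then t else 1)]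
  rw [← Finset.card_univ, ← prod_const, Fintype.prod_congr _ _ fun i => ?_]
  cases x i <;> simp [add_comm]

theorem rpow_mul_card_hammingDist_le_le {t : ℝ} (r : ℝ) (ht0 : 0 < t) (ht1 : t ≤ 1) :
    t ^ r * #{q : (ι → Bool) × (ι → Bool) | (hammingDist q.1 q.2 : ℝ) ≤ r}
      ≤ (2 * (1 + t)) ^ card ι := by
  calc t ^ r * #{q : (ι → Bool) × (ι → Bool) | (hammingDist q.1 q.2 : ℝ) ≤ r}
      = ∑ q ∈ {q : (ι → Bool) × (ι → Bool) | (hammingDist q.1 q.2 : ℝ) ≤ r}, t ^ r := by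
        rw [sum_const, nsmul_eq_mul, mul_comm]
    _ ≤ ∑ q ∈ {q : (ι → Bool) × (ι → Bool) | (hammingDist q.1 q.2 : ℝ) ≤ r},
          t ^ hammingDist q.1 q.2 := by
        refine sum_le_sum fun q hq => ?_
        rw [← Real.rpow_natCast]
        exact Real.rpow_le_rpow_of_exponent_ge ht0 ht1 (mem_filter.1 hq).2
    _ ≤ ∑ q : (ι → Bool) × (ι → Bool), t ^ hammingDist q.1 q.2 :=
        sum_le_sum_of_subset_of_nonneg (filter_subset _ _) fun _ _ _ => by positivity
    _ = (2 * (1 + t)) ^ card ι := by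
        simp [Fintype.sum_prod_type, sum_pow_hammingDist, mul_pow]

theorem card_hammingDist_le_le (r : ℝ) :
    (#{q : (ι → Bool) × (ι → Bool) | (hammingDist q.1 q.2 : ℝ) ≤ r} : ℝ)
      ≤ 2 ^ r * 3 ^ card ι := by
  have h := rpow_mul_card_hammingDist_le_le (ι := ι) r (t := 2⁻¹) (by norm_num) (by norm_num)
  rw [Real.inv_rpow zero_le_two, ← div_eq_inv_mul, div_le_iff₀ (by positivity)] at h
  norm_num at h
  linarith

end HammingBall

section PairsOfCoordinates

variable {ι α : Type*} [Fintype ι] [DecidableEq ι] [Fintype α]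

theorem card_filter_apply_pair_mul (P : α → α → Prop) [DecidableRel P] {i j : ι} (hij : i ≠ j) :
    #{A : ι → α | P (A i) (A j)} * card α ^ 2 = #{q : α × α | P q.1 q.2} * card α ^ card ι := by
  let e := (Equiv.funSplitAt i α).trans <|
    ((Equiv.refl α).prodCongr (Equiv.funSplitAt ⟨j, hij.symm⟩ α)).trans
      (Equiv.prodAssoc _ _ _).symm
  have hsplit : #{A : ι → α | P (A i) (A j)}
      = #(({q : α × α | P q.1 q.2} : Finset (α × α)) ×ˢ univ) :=
    card_equiv e (by simp [e])
  have hrest : card {k : {k // k ≠ i} // k ≠ ⟨j, hij.symm⟩} + 2 = card ι := by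
    have : 2 ≤ card ι := Fintype.one_lt_card_iff.mpr ⟨i, j, hij⟩
    simp only [Fintype.card_subtype_compl, Fintype.card_unique]
    omega
  rw [hsplit, card_product, card_univ, Fintype.card_fun, mul_assoc, ← pow_add, hrest]

theorem card_filter_exists_pair_mul_le [DecidableEq α] (P : α → α → Prop) [DecidableRel P] :
    #{A : ι → α | ∃ i j, i ≠ j ∧ P (A i) (A j)} * card α ^ 2
      ≤ card ι ^ 2 * #{q : α × α | P q.1 q.2} * card α ^ card ι := by
  have hcover : ({A : ι → α | ∃ i j, i ≠ j ∧ P (A i) (A j)} : Finset (ι → α))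
      ⊆ univ.offDiag.biUnion fun p => {A : ι → α | P (A p.1) (A p.2)} := by
    intro A hA
    obtain ⟨i, j, hij, hP⟩ := (mem_filter.1 hA).2
    exact mem_biUnion.2 ⟨(i, j), by simpa using hij, by simpa using hP⟩
  calc #{A : ι → α | ∃ i j, i ≠ j ∧ P (A i) (A j)} * card α ^ 2
      ≤ (∑ p ∈ univ.offDiag, #{A : ι → α | P (A p.1) (A p.2)}) * card α ^ 2 := by
        gcongr
        exact (card_le_card hcover).trans card_biUnion_le
    _ = #(univ : Finset ι).offDiag * (#{q : α × α | P q.1 q.2} * card α ^ card ι) := by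
        rw [sum_mul, ← smul_eq_mul, ← sum_const]
        exact sum_congr rfl fun p hp => card_filter_apply_pair_mul P (mem_offDiag.1 hp).2.2
    _ ≤ card ι ^ 2 * #{q : α × α | P q.1 q.2} * card α ^ card ι := by
        rw [offDiag_card, card_univ, mul_assoc, sq]
        gcongr
        exact Nat.sub_le _ _

end PairsOfCoordinates

theorem three_quarters_pow_le (d : ℕ) : (3 / 4 : ℝ) ^ d ≤ 2 ^ (-(d : ℝ) / 3) := by
  calc (3 / 4 : ℝ) ^ d = ((3 / 4 : ℝ) ^ (3 : ℝ)) ^ ((d : ℝ) / 3) := by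
        rw [← Real.rpow_mul (by norm_num), mul_div_cancel₀ _ three_ne_zero, Real.rpow_natCast]
    _ ≤ (2⁻¹ : ℝ) ^ ((d : ℝ) / 3) := by gcongr; norm_num
    _ = 2 ^ (-(d : ℝ) / 3) := by
        rw [Real.inv_rpow zero_le_two, ← Real.rpow_neg zero_le_two, neg_div]

theorem card_hammingDist_le_quarter_div_le (d : ℕ) :
    (#{q : (Fin d → Bool) × (Fin d → Bool) | (hammingDist q.1 q.2 : ℝ) ≤ (d : ℝ) / 4} : ℝ)
      / 4 ^ d ≤ 2 ^ (-(d : ℝ) / 12) := by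
  have h := card_hammingDist_le_le (ι := Fin d) ((d : ℝ) / 4)
  rw [Fintype.card_fin] at h
  calc _ ≤ (2 : ℝ) ^ ((d : ℝ) / 4) * (3 / 4) ^ d := by
        rw [div_le_iff₀ (by positivity), mul_assoc, ← mul_pow]
        norm_num
        exact h
    _ ≤ (2 : ℝ) ^ ((d : ℝ) / 4) * 2 ^ (-(d : ℝ) / 3) := by gcongr; exact three_quarters_pow_le d
    _ = 2 ^ (-(d : ℝ) / 12) := by rw [← Real.rpow_add two_pos]; ring_nf

theorem random_anchors_far_apart_general (d m : ℕ)
    (hm64 : (m : ℝ) ≤ (2 : ℝ) ^ ((d : ℝ) / 64)) :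
    ({A : Fin m → (Fin d → Bool) |
        ∃ i j : Fin m, i ≠ j ∧ (hammingDist (A i) (A j) : ℝ) ≤ (d : ℝ) / 4}.ncard : ℝ) /
      ((2 : ℝ) ^ d) ^ m ≤ (2 : ℝ) ^ (-(d : ℝ) / 32) := by
  classical
  have hunion := card_filter_exists_pair_mul_le (ι := Fin m) (α := Fin d → Bool)
    fun x y => (hammingDist x y : ℝ) ≤ (d : ℝ) / 4
  simp only [Fintype.card_fin, Fintype.card_fun, Fintype.card_bool] at hunion
  have hm2 : (m : ℝ) ^ 2 ≤ 2 ^ ((d : ℝ) / 32) := by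
    calc (m : ℝ) ^ 2 ≤ (2 ^ ((d : ℝ) / 64)) ^ 2 := by gcongr
      _ = 2 ^ ((d : ℝ) / 32) := by rw [← Real.rpow_mul_natCast zero_le_two]; ring_nf
  have h4 : (4 : ℝ) ^ d = (2 ^ d) ^ 2 := by rw [← pow_mul, mul_comm, pow_mul]; norm_num
  rw [Set.ncard_eq_toFinset_card', Set.toFinset_ofPred]
  calc _ ≤ (m : ℝ) ^ 2 * ((#{q : (Fin d → Bool) × (Fin d → Bool) |
          (hammingDist q.1 q.2 : ℝ) ≤ (d : ℝ) / 4} : ℝ) / 4 ^ d) := by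
        rw [h4, mul_div_assoc', div_le_div_iff₀ (by positivity) (by positivity)]
        exact_mod_cast hunion
    _ ≤ (2 : ℝ) ^ ((d : ℝ) / 32) * 2 ^ (-(d : ℝ) / 12) := by
        gcongr; exact card_hammingDist_le_quarter_div_le d
    _ ≤ 2 ^ (-(d : ℝ) / 32) := by
        rw [← Real.rpow_add two_pos]
        gcongr
        · norm_num
        · linarith [(d.cast_nonneg : (0 : ℝ) ≤ d)]

/-- If `m ≤ 2^(d/64)` points `A_1, …, A_m` are chosen independently and uniformly at
random from `{0,1}^d`, then the probability (here expressed as a ratio of counts, since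
the `m` independent uniform points form a uniform point of the product space) that some
two distinct points are at Hamming distance at most `d/4` is at most `2^(−d/32)`. -/
theorem random_anchors_far_apart (d m : ℕ) (hd : 0 < d) (hm : 0 < m)
    (hm64 : (m : ℝ) ≤ (2 : ℝ) ^ ((d : ℝ) / 64)) :
    ({A : Fin m → (Fin d → Bool) |
        ∃ i j : Fin m, i ≠ j ∧ (hammingDist (A i) (A j) : ℝ) ≤ (d : ℝ) / 4}.ncard : ℝ) /
      ((2 : ℝ) ^ d) ^ m ≤ (2 : ℝ) ^ (-(d : ℝ) / 32) :=
  random_anchors_far_apart_general d m hm64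
end

section
/- For all positive integers d and all even integers r with 4 ≤ r and r ≤ 2^{−16}·d, the following inequality holds: Σ_{i=0}^{r/2} C(d,i) ≤ (r/d)^{r/8} · C(d, r−1), where C(d,i) denotes the binomial coefficient d choose i and (r/d)^{r/8} is the real power of the rational number r/d. -/
lemma two_mul_choose_le (d k : ℕ) (h : 3 * k + 3 ≤ d) :
    2 * d.choose k ≤ d.choose (k + 1) := by
  have heq : d.choose (k + 1) * (k + 1) = d.choose k * (d - k) :=
    Nat.choose_succ_right_eq d k
  have h1 : d.choose k * (2 * (k + 1)) ≤ d.choose k * (d - k) :=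
    Nat.mul_le_mul_left _ (by omega)
  have h2 : 2 * d.choose k * (k + 1) ≤ d.choose (k + 1) * (k + 1) := by
    rw [heq]; linarith [h1]
  exact Nat.le_of_mul_le_mul_right h2 (by omega)

lemma sum_choose_le_two_mul (d m : ℕ) (h : 3 * m ≤ d) :
    ∑ i ∈ Finset.range (m + 1), d.choose i ≤ 2 * d.choose m := by
  induction m with
  | zero => simp
  | succ k ih =>
    rw [Finset.sum_range_succ]
    have h2 := two_mul_choose_le d k (by omega)
    have := ih (by omega)
    omega

lemma choose_shift (d r k : ℕ) (hrd : r ≤ d) :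
    ∀ t : ℕ, k + t ≤ r → d.choose k * (d - r) ^ t ≤ d.choose (k + t) * r ^ t := by
  intro t
  induction t with
  | zero => simp
  | succ s ih =>
    intro ht
    have hstep : d.choose (k + s) * (d - r) ≤ d.choose (k + s + 1) * r := by
      have heq : d.choose (k + s + 1) * (k + s + 1) = d.choose (k + s) * (d - (k + s)) :=
        Nat.choose_succ_right_eq d (k + s)
      calc d.choose (k + s) * (d - r) ≤ d.choose (k + s) * (d - (k + s)) :=
            Nat.mul_le_mul_left _ (by omega)
        _ = d.choose (k + s + 1) * (k + s + 1) := heq.symm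
        _ ≤ d.choose (k + s + 1) * r := Nat.mul_le_mul_left _ (by omega)
    calc d.choose k * (d - r) ^ (s + 1)
        = d.choose k * (d - r) ^ s * (d - r) := by ring
      _ ≤ d.choose (k + s) * r ^ s * (d - r) :=
          Nat.mul_le_mul_right _ (ih (by omega))
      _ = d.choose (k + s) * (d - r) * r ^ s := by ring
      _ ≤ d.choose (k + s + 1) * r * r ^ s := Nat.mul_le_mul_right _ hstep
      _ = d.choose (k + (s + 1)) * r ^ (s + 1) := by ring_nf
  
lemma key_rpow (m : ℕ) (x : ℝ) (hm : 2 ≤ m) (hx : 0 < x) (hx2 : x ≤ 1 / 2 ^ 16) :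
    2 * (2 * x) ^ (m - 1) ≤ x ^ ((2 * m : ℝ) / 8) := by
  obtain ⟨n, rfl⟩ : ∃ n, m = n + 1 := ⟨m - 1, by omega⟩
  have hn : 1 ≤ n := by omega
  simp only [Nat.add_sub_cancel]
  have h2 : (0:ℝ) < 2 := by norm_num
  have hL : 2 * (2 * x) ^ n = 2 ^ ((n:ℝ) + 1) * x ^ (n:ℝ) := by
    rw [mul_pow, ← Real.rpow_natCast (2:ℝ) n, ← Real.rpow_natCast x n,
      Real.rpow_add h2, Real.rpow_one]
    ring
  rw [hL]
  have hcast : (2 * ((n:ℕ)+1 : ℕ) : ℝ) / 8 = (2 * ((n:ℝ) + 1)) / 8 := by push_cast; ring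
  rw [hcast]
  set e : ℝ := (2 * ((n:ℝ) + 1)) / 8 with he
  set c : ℝ := (n:ℝ) - e with hc
  have hc4 : c = (3 * (n:ℝ) - 1) / 4 := by rw [hc, he]; ring
  have hcpos : 0 ≤ c := by
    rw [hc4]
    have : (1:ℝ) ≤ (n:ℝ) := by exact_mod_cast hn
    linarith
  have hxi : (2:ℝ) ^ (16:ℝ) ≤ x⁻¹ := by
    have h1 : ((1 / 2 ^ 16 : ℝ))⁻¹ ≤ x⁻¹ := inv_anti₀ hx hx2
    have h2' : (2:ℝ) ^ (16:ℝ) = 2 ^ (16:ℕ) := by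
      rw [show (16:ℝ) = ((16:ℕ):ℝ) by norm_num, Real.rpow_natCast]
    rw [h2']
    simpa using h1
  have hkey : (2:ℝ) ^ ((n:ℝ) + 1) ≤ x ^ (e - (n:ℝ)) := by
    have hxe : x ^ (e - (n:ℝ)) = (x⁻¹) ^ c := by
      rw [show e - (n:ℝ) = -c by rw [hc]; ring, Real.rpow_neg hx.le,
        ← Real.inv_rpow hx.le]
    rw [hxe]
    have hstep1 : ((2:ℝ) ^ (16:ℝ)) ^ c ≤ (x⁻¹) ^ c :=
      Real.rpow_le_rpow (Real.rpow_nonneg (by norm_num) _) hxi hcpos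
    have hstep2 : ((2:ℝ) ^ (16:ℝ)) ^ c = (2:ℝ) ^ (16 * c) := by
      rw [← Real.rpow_mul (by norm_num)]
    have hstep3 : (2:ℝ) ^ ((n:ℝ) + 1) ≤ (2:ℝ) ^ (16 * c) := by
      apply Real.rpow_le_rpow_left_iff (by norm_num : (1:ℝ) < 2) |>.mpr
      rw [hc4]
      have : (1:ℝ) ≤ (n:ℝ) := by exact_mod_cast hn
      linarith
    calc (2:ℝ) ^ ((n:ℝ) + 1) ≤ (2:ℝ) ^ (16 * c) := hstep3
      _ = ((2:ℝ) ^ (16:ℝ)) ^ c := hstep2.symm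
      _ ≤ (x⁻¹) ^ c := hstep1
  calc (2:ℝ) ^ ((n:ℝ) + 1) * x ^ (n:ℝ)
      ≤ x ^ (e - (n:ℝ)) * x ^ (n:ℝ) :=
        mul_le_mul_of_nonneg_right hkey (Real.rpow_nonneg hx.le _)
    _ = x ^ e := by rw [← Real.rpow_add hx]; ring_nf

/-- Counting bound used in the lower-bound analysis: for even `4 ≤ r ≤ 2^(−16)·d`, the
size of a Hamming ball of radius `r/2` is at most `(r/d)^(r/8)` times the number of
points at distance `r−1`: `Σ_{i=0}^{r/2} C(d,i) ≤ (r/d)^(r/8) · C(d, r−1)`. -/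
theorem hamming_ball_vs_sphere (d r : ℕ) (hd : 0 < d) (hr4 : 4 ≤ r) (hreven : Even r)
    (hrd : (r : ℝ) ≤ (d : ℝ) / 2 ^ 16) :
    ((∑ i ∈ Finset.range (r / 2 + 1), d.choose i : ℕ) : ℝ) ≤
      ((r : ℝ) / (d : ℝ)) ^ ((r : ℝ) / 8) * (d.choose (r - 1) : ℝ) := by
  obtain ⟨m, hmm⟩ := hreven
  have hrm : r = 2 * m := by omega
  have hm2 : 2 ≤ m := by omega
  have hd0 : (0:ℝ) < d := by exact_mod_cast hd
  have hr0 : (0:ℝ) < r := by exact_mod_cast (by omega : 0 < r)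
  have hmul : (r:ℝ) * 2 ^ 16 ≤ d := (le_div_iff₀ (by norm_num : (0:ℝ) < 2^16)).mp hrd
  have hN : r * 65536 ≤ d := by
    have h : ((r * 65536 : ℕ) : ℝ) ≤ (d:ℝ) := by push_cast; norm_num at hmul ⊢; linarith
    exact_mod_cast h
  have hrled : r ≤ d := by omega
  have hdr : (0:ℝ) < (d:ℝ) - r := by
    have : r < d := by omega
    have : (r:ℝ) < d := by exact_mod_cast this
    linarith
  -- Step A
  have hA : ∑ i ∈ Finset.range (m + 1), d.choose i ≤ 2 * d.choose m :=
    sum_choose_le_two_mul d m (by omega)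
  -- Step B
  have hB : d.choose m * (d - r) ^ (m - 1) ≤ d.choose (r - 1) * r ^ (m - 1) := by
    have h := choose_shift d r m hrled (m - 1) (by omega)
    rwa [show m + (m - 1) = r - 1 by omega] at h
  have hB' : (d.choose m : ℝ) * ((d:ℝ) - r) ^ (m - 1)
      ≤ (d.choose (r - 1) : ℝ) * (r:ℝ) ^ (m - 1) := by
    have h := (Nat.cast_le (α := ℝ)).mpr hB
    push_cast [Nat.cast_sub hrled] at h
    exact h
  have hCm : (d.choose m : ℝ) ≤ (d.choose (r - 1) : ℝ) * ((r:ℝ) / ((d:ℝ) - r)) ^ (m - 1) := by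
    rw [div_pow, ← mul_div_assoc, le_div_iff₀ (pow_pos hdr _)]
    exact hB'
  -- ratio bound
  set x : ℝ := (r:ℝ) / d with hxdef
  have hxpos : 0 < x := div_pos hr0 hd0
  have hxle : x ≤ 1 / 2 ^ 16 := by
    rw [hxdef, div_le_div_iff₀ hd0 (by norm_num : (0:ℝ) < 2^16)]
    linarith
  have hratio : (r:ℝ) / ((d:ℝ) - r) ≤ 2 * x := by
    rw [hxdef, div_le_iff₀ hdr, mul_comm 2 ((r:ℝ)/d), mul_assoc, div_mul_eq_mul_div,
      le_div_iff₀ hd0]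
    nlinarith [hmul, hr0.le]
  have hpow : ((r:ℝ) / ((d:ℝ) - r)) ^ (m - 1) ≤ (2 * x) ^ (m - 1) :=
    pow_le_pow_left₀ (by positivity) hratio _
  have hkey := key_rpow m x hm2 hxpos hxle
  have hchoose0 : (0:ℝ) ≤ (d.choose (r - 1) : ℝ) := by positivity
  have hre : (r:ℝ) / 8 = (2 * (m:ℝ)) / 8 := by
    rw [hrm]; push_cast; ring
  rw [hre]
  calc ((∑ i ∈ Finset.range (r / 2 + 1), d.choose i : ℕ) : ℝ)
      ≤ ((2 * d.choose m : ℕ) : ℝ) := by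
        have hA' : ∑ i ∈ Finset.range (r / 2 + 1), d.choose i ≤ 2 * d.choose m := by
          rwa [show r / 2 = m by omega]
        exact_mod_cast hA'
    _ = 2 * (d.choose m : ℝ) := by push_cast; ring
    _ ≤ 2 * ((d.choose (r - 1) : ℝ) * ((r:ℝ) / ((d:ℝ) - r)) ^ (m - 1)) := by linarith
    _ ≤ 2 * ((d.choose (r - 1) : ℝ) * (2 * x) ^ (m - 1)) := by
        have := mul_le_mul_of_nonneg_left hpow hchoose0
        linarith
    _ = (2 * (2 * x) ^ (m - 1)) * (d.choose (r - 1) : ℝ) := by ring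
    _ ≤ x ^ ((2 * (m:ℝ)) / 8) * (d.choose (r - 1) : ℝ) :=
        mul_le_mul_of_nonneg_right hkey hchoose0
end

section
/- Fix ε ∈ (0, 1/3) and an integer d ≥ 4. Let f: {0,1}^d→ℝ be a function whose ℓ₀-distance to the Lipschitz property with respect to the hypercube H_d is at most ε, and let C be a minimum vertex cover of the 0-violation graph B_{0,f}. Set t = 2·√(d·ln(d/ε)). For p chosen uniformly at random from {0,1}^d, let I = [f(p)−t, f(p)+t] and let ε[Ī] = |{x ∈ C : f(x) ∉ I}| / 2^d. Then the probability over the choice of p that Pr_{x uniform in {0,1}^d}[f(x) ∉ I] exceeds ε[Ī] + ε/d is at most 5/12. -/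
open Finset Real

lemma hammingDist_cons {n : ℕ} (a b : Bool) (x y : Fin n → Bool) :
    hammingDist (Fin.cons a x : Fin (n+1) → Bool) (Fin.cons b y) =
      (if a = b then 0 else 1) + hammingDist x y := by
  simp only [hammingDist, Finset.card_filter]
  rw [Fin.sum_univ_succ]
  by_cases h : a = b <;> simp [h]

lemma exp_add_exp_le (a b : ℝ) :
    Real.exp a + Real.exp b ≤ 2 * Real.exp ((a + b) / 2) * Real.exp ((a - b) ^ 2 / 8) := by
  have e1 : Real.exp ((a+b)/2) * Real.exp ((a-b)/2) = Real.exp a := by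
    rw [← Real.exp_add]; congr 1; ring
  have e2 : Real.exp ((a+b)/2) * Real.exp (-((a-b)/2)) = Real.exp b := by
    rw [← Real.exp_add]; congr 1; ring
  have h1 : Real.exp a + Real.exp b = 2 * Real.exp ((a + b) / 2) * Real.cosh ((a - b) / 2) := by
    rw [Real.cosh_eq]; linear_combination -e1 - e2
  rw [h1]
  have h2 : Real.cosh ((a - b) / 2) ≤ Real.exp (((a - b) / 2) ^ 2 / 2) :=
    Real.cosh_le_exp_half_sq _
  have h3 : ((a - b) / 2) ^ 2 / 2 = (a - b) ^ 2 / 8 := by ring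
  rw [h3] at h2
  nlinarith [Real.exp_pos ((a+b)/2)]

lemma sum_cons_split {n : ℕ} (F : (Fin (n+1) → Bool) → ℝ) :
    ∑ x : Fin (n+1) → Bool, F x
      = ∑ y : Fin n → Bool, (F (Fin.cons false y) + F (Fin.cons true y)) := by
  rw [← Equiv.sum_comp (Fin.consEquiv (fun _ => Bool)) F, Fintype.sum_prod_type,
    Fintype.sum_bool]
  rw [← Finset.sum_add_distrib]
  exact Finset.sum_congr rfl (fun y _ => add_comm _ _)

lemma mgf_cube : ∀ (n : ℕ) (h : (Fin n → Bool) → ℝ),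
    (∀ x y : Fin n → Bool, |h x - h y| ≤ (hammingDist x y : ℝ)) → ∀ l : ℝ,
    ∑ x : Fin n → Bool, Real.exp (l * h x) ≤
      2 ^ n * Real.exp (l * ((∑ x : Fin n → Bool, h x) / 2 ^ n) + n * l ^ 2 / 8) := by
  intro n
  induction n with
  | zero =>
    intro h _ l
    rw [Fintype.sum_unique, Fintype.sum_unique]
    norm_num
  | succ n ih =>
    intro h hL l
    set h0 : (Fin n → Bool) → ℝ := fun y => h (Fin.cons false y) with hh0
    set h1 : (Fin n → Bool) → ℝ := fun y => h (Fin.cons true y) with hh1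
    set m : (Fin n → Bool) → ℝ := fun y => (h0 y + h1 y) / 2 with hm
    have hdc : ∀ (b : Bool) (y z : Fin n → Bool),
        (hammingDist (Fin.cons b y : Fin (n+1) → Bool) (Fin.cons b z) : ℝ)
          = (hammingDist y z : ℝ) := by
      intro b y z; rw [hammingDist_cons]; simp
    have hmL : ∀ y z : Fin n → Bool, |m y - m z| ≤ (hammingDist y z : ℝ) := by
      intro y z
      have l0 := hL (Fin.cons false y) (Fin.cons false z)
      have l1 := hL (Fin.cons true y) (Fin.cons true z)
      rw [hdc] at l0 l1
      have e : m y - m z = ((h0 y - h0 z) + (h1 y - h1 z)) / 2 := by rw [hm]; ring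
      rw [e]
      have h2 := abs_add_le (h0 y - h0 z) (h1 y - h1 z)
      rw [abs_div, abs_two]
      linarith
    have hδ : ∀ y : Fin n → Bool, |h1 y - h0 y| ≤ 1 := by
      intro y
      have := hL (Fin.cons true y) (Fin.cons false y)
      rw [hammingDist_cons] at this
      simpa using this
    -- pointwise bound
    have hpt : ∀ y : Fin n → Bool,
        Real.exp (l * h0 y) + Real.exp (l * h1 y)
          ≤ 2 * Real.exp (l ^ 2 / 8) * Real.exp (l * m y) := by
      intro y
      have h1' := exp_add_exp_le (l * h0 y) (l * h1 y)
      have e1 : (l * h0 y + l * h1 y) / 2 = l * m y := by rw [hm]; ring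
      have e2 : Real.exp ((l * h0 y - l * h1 y) ^ 2 / 8) ≤ Real.exp (l ^ 2 / 8) := by
        apply Real.exp_le_exp.2
        have h3 : (l * h0 y - l * h1 y) ^ 2 = l ^ 2 * (h1 y - h0 y) ^ 2 := by ring
        have h4 : (h1 y - h0 y) ^ 2 ≤ 1 := by
          have := hδ y
          nlinarith [abs_nonneg (h1 y - h0 y), sq_abs (h1 y - h0 y)]
        rw [h3]
        nlinarith [sq_nonneg l]
      rw [e1] at h1'
      calc Real.exp (l * h0 y) + Real.exp (l * h1 y)
          ≤ 2 * Real.exp (l * m y) * Real.exp ((l * h0 y - l * h1 y) ^ 2 / 8) := h1'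
        _ ≤ 2 * Real.exp (l ^ 2 / 8) * Real.exp (l * m y) := by
            nlinarith [Real.exp_pos (l * m y), e2]
    have hsum : ∑ y : Fin n → Bool, m y = (∑ x : Fin (n+1) → Bool, h x) / 2 := by
      rw [sum_cons_split h]
      rw [eq_div_iff (by norm_num : (2:ℝ) ≠ 0)]
      rw [Finset.sum_mul]
      exact Finset.sum_congr rfl (fun y _ => by rw [hm]; ring)
    calc ∑ x : Fin (n+1) → Bool, Real.exp (l * h x)
        = ∑ y : Fin n → Bool,
            (Real.exp (l * h0 y) + Real.exp (l * h1 y)) := by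
          rw [sum_cons_split (fun x => Real.exp (l * h x))]
      _ ≤ ∑ y : Fin n → Bool, 2 * Real.exp (l ^ 2 / 8) * Real.exp (l * m y) :=
          Finset.sum_le_sum (fun y _ => hpt y)
      _ = 2 * Real.exp (l ^ 2 / 8) * ∑ y : Fin n → Bool, Real.exp (l * m y) := by
          rw [Finset.mul_sum]
      _ ≤ 2 * Real.exp (l ^ 2 / 8) *
            (2 ^ n * Real.exp (l * ((∑ y : Fin n → Bool, m y) / 2 ^ n) + n * l ^ 2 / 8)) := by
          have hp : (0:ℝ) < 2 * Real.exp (l ^ 2 / 8) := by positivity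
          exact mul_le_mul_of_nonneg_left (ih m hmL l) (le_of_lt hp)
      _ = 2 ^ (n+1) * Real.exp (l * ((∑ x : Fin (n+1) → Bool, h x) / 2 ^ (n+1))
            + (n+1 : ℕ) * l ^ 2 / 8) := by
          rw [hsum]
          have E := Real.exp_add (l ^ 2 / 8)
            (l * ((∑ x : Fin (n+1) → Bool, h x) / 2 / 2 ^ n) + (n:ℝ) * l ^ 2 / 8)
          have harg : l ^ 2 / 8 + (l * ((∑ x : Fin (n+1) → Bool, h x) / 2 / 2 ^ n)
                + (n:ℝ) * l ^ 2 / 8)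
              = l * ((∑ x : Fin (n+1) → Bool, h x) / 2 ^ (n+1)) + ((n+1 : ℕ) : ℝ) * l ^ 2 / 8 := by
            push_cast; ring
          rw [harg] at E
          rw [E]; ring

lemma chernoff_count (d : ℕ) (hd : 0 < d) (h : (Fin d → Bool) → ℝ)
    (hL : ∀ x y : Fin d → Bool, |h x - h y| ≤ (hammingDist x y : ℝ)) (s : ℝ) (hs : 0 < s) :
    ((Finset.univ.filter (fun x : Fin d → Bool =>
        (∑ z : Fin d → Bool, h z) / 2 ^ d + s ≤ h x)).card : ℝ)
      ≤ 2 ^ d * Real.exp (-(2 * s ^ 2 / d)) := by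
  have hd' : (0:ℝ) < d := by exact_mod_cast hd
  set μ : ℝ := (∑ z : Fin d → Bool, h z) / 2 ^ d with hμ
  set l : ℝ := 4 * s / d with hl_def
  have hl : 0 < l := by positivity
  set A := Finset.univ.filter (fun x : Fin d → Bool => μ + s ≤ h x) with hA
  have step1 : (A.card : ℝ) * Real.exp (l * (μ + s)) ≤
      ∑ x : Fin d → Bool, Real.exp (l * h x) := by
    calc (A.card : ℝ) * Real.exp (l * (μ + s))
        = ∑ _x ∈ A, Real.exp (l * (μ + s)) := by
          rw [Finset.sum_const, nsmul_eq_mul]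
      _ ≤ ∑ x ∈ A, Real.exp (l * h x) := by
          refine Finset.sum_le_sum (fun x hx => ?_)
          have hx' : μ + s ≤ h x := (Finset.mem_filter.1 hx).2
          exact Real.exp_le_exp.2 (mul_le_mul_of_nonneg_left hx' hl.le)
      _ ≤ ∑ x : Fin d → Bool, Real.exp (l * h x) :=
          Finset.sum_le_sum_of_subset_of_nonneg (Finset.filter_subset _ _)
            (fun _ _ _ => (Real.exp_pos _).le)
  have step2 := mgf_cube d h hL l
  have harg : l * μ + d * l ^ 2 / 8 = -(2 * s ^ 2 / d) + l * (μ + s) := by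
    rw [hl_def]
    field_simp
    ring
  have key : (A.card : ℝ) * Real.exp (l * (μ + s)) ≤
      (2 ^ d * Real.exp (-(2 * s ^ 2 / d))) * Real.exp (l * (μ + s)) := by
    calc (A.card : ℝ) * Real.exp (l * (μ + s))
        ≤ 2 ^ d * Real.exp (l * μ + d * l ^ 2 / 8) := le_trans step1 step2
      _ = (2 ^ d * Real.exp (-(2 * s ^ 2 / d))) * Real.exp (l * (μ + s)) := by
          rw [harg, Real.exp_add]; ring
  exact le_of_mul_le_mul_right key (Real.exp_pos _)

lemma chernoff_abs (d : ℕ) (hd : 0 < d) (h : (Fin d → Bool) → ℝ)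
    (hL : ∀ x y : Fin d → Bool, |h x - h y| ≤ (hammingDist x y : ℝ)) (s : ℝ) (hs : 0 < s) :
    ((Finset.univ.filter (fun x : Fin d → Bool =>
        s < |h x - (∑ z : Fin d → Bool, h z) / 2 ^ d|)).card : ℝ)
      ≤ 2 ^ d * (2 * Real.exp (-(2 * s ^ 2 / d))) := by
  have h1 := chernoff_count d hd h hL s hs
  have hneg : ∀ x y : Fin d → Bool, |(-h x) - (-h y)| ≤ (hammingDist x y : ℝ) := by
    intro x y
    rw [show (-h x) - (-h y) = -(h x - h y) by ring, abs_neg]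
    exact hL x y
  have h2 := chernoff_count d hd (fun x => -h x) hneg s hs
  simp only [Finset.sum_neg_distrib] at h2
  have hsub : Finset.univ.filter (fun x : Fin d → Bool =>
        s < |h x - (∑ z : Fin d → Bool, h z) / 2 ^ d|) ⊆
      (Finset.univ.filter (fun x : Fin d → Bool =>
        (∑ z : Fin d → Bool, h z) / 2 ^ d + s ≤ h x)) ∪
      (Finset.univ.filter (fun x : Fin d → Bool =>
        (-∑ z : Fin d → Bool, h z) / 2 ^ d + s ≤ -h x)) := by
    intro x hx
    have hx' : s < |h x - (∑ z : Fin d → Bool, h z) / 2 ^ d| :=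
      (Finset.mem_filter.1 hx).2
    rcases lt_abs.1 hx' with hc | hc
    · exact Finset.mem_union_left _ (Finset.mem_filter.2 ⟨Finset.mem_univ _, by linarith⟩)
    · refine Finset.mem_union_right _ (Finset.mem_filter.2 ⟨Finset.mem_univ _, ?_⟩)
      rw [neg_div]
      linarith
  have hcard := (Finset.card_le_card hsub).trans (Finset.card_union_le _ _)
  have hcard' : ((Finset.univ.filter (fun x : Fin d → Bool =>
      s < |h x - (∑ z : Fin d → Bool, h z) / 2 ^ d|)).card : ℝ) ≤
      ((Finset.univ.filter (fun x : Fin d → Bool =>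
        (∑ z : Fin d → Bool, h z) / 2 ^ d + s ≤ h x)).card : ℝ) +
      ((Finset.univ.filter (fun x : Fin d → Bool =>
        (-∑ z : Fin d → Bool, h z) / 2 ^ d + s ≤ -h x)).card : ℝ) := by
    exact_mod_cast hcard
  linarith

/-- Concentration for functions close to Lipschitz (Lemma on interval truncation): if
`f : {0,1}^d → ℝ` is `ε`-close to Lipschitz in `ℓ₀`-distance, `C` is a minimum vertex
cover of the 0-violation graph of `f`, `t = 2√(d·ln(d/ε))`, and `p` is uniform in
`{0,1}^d` with `I = [f(p)−t, f(p)+t]`, then with probability at least `7/12` over `p`,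
`Pr_x[f(x) ∉ I] ≤ ε[Ī] + ε/d`, where `ε[Ī] = |{x ∈ C : f(x) ∉ I}|/2^d`. -/
theorem truncation_concentration (d : ℕ) (hd : 4 ≤ d) (ε : ℝ) (hε0 : 0 < ε)
    (hε3 : ε < 1 / 3)
    (f : (Fin d → Bool) → ℝ)
    (hclose : ∃ g : (Fin d → Bool) → ℝ,
      (∀ x y : Fin d → Bool, |g x - g y| ≤ (hammingDist x y : ℝ)) ∧
      ({x : Fin d → Bool | f x ≠ g x}.ncard : ℝ) / 2 ^ d ≤ ε)
    (C : Set (Fin d → Bool))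
    (hcover : ∀ x y : Fin d → Bool,
      |f x - f y| - (hammingDist x y : ℝ) > 0 → f x < f y → x ∈ C ∨ y ∈ C)
    (hmin : ∀ C' : Set (Fin d → Bool),
      (∀ x y : Fin d → Bool,
        |f x - f y| - (hammingDist x y : ℝ) > 0 → f x < f y → x ∈ C' ∨ y ∈ C') →
      C.ncard ≤ C'.ncard) :
    ({p : Fin d → Bool |
        ({x : Fin d → Bool |
            f x ∉ Set.Icc (f p - 2 * Real.sqrt (d * Real.log (d / ε)))
              (f p + 2 * Real.sqrt (d * Real.log (d / ε)))}.ncard : ℝ) / 2 ^ d >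
        ((C ∩ {x : Fin d → Bool |
            f x ∉ Set.Icc (f p - 2 * Real.sqrt (d * Real.log (d / ε)))
              (f p + 2 * Real.sqrt (d * Real.log (d / ε)))}).ncard : ℝ) / 2 ^ d +
          ε / d}.ncard : ℝ) / 2 ^ d ≤ 5 / 12 := by
  classical
  obtain ⟨g, hg, hgc⟩ := hclose
  have hd0 : 0 < d := by omega
  have hd' : (0:ℝ) < d := by exact_mod_cast hd0
  have hd4 : (4:ℝ) ≤ d := by exact_mod_cast hd
  have hN : (0:ℝ) < 2 ^ d := by positivity
  set s : ℝ := Real.sqrt (d * Real.log (d / ε)) with hs_def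
  -- step A : bound on |C|
  have hC'cov : ∀ x y : Fin d → Bool,
      |f x - f y| - (hammingDist x y : ℝ) > 0 → f x < f y →
      x ∈ {x : Fin d → Bool | f x ≠ g x} ∨ y ∈ {x : Fin d → Bool | f x ≠ g x} := by
    intro x y hv hlt
    by_contra hcon
    push_neg at hcon
    obtain ⟨hx, hy⟩ := hcon
    simp only [Set.mem_setOf_eq, not_not] at hx hy
    have := hg x y
    rw [← hx, ← hy] at this
    linarith
  have hCcard : (C.ncard : ℝ) ≤ ε * 2 ^ d := by
    have h1 := hmin _ hC'cov
    have h1' : (C.ncard : ℝ) ≤ ({x : Fin d → Bool | f x ≠ g x}.ncard : ℝ) := by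
      exact_mod_cast h1
    rw [div_le_iff₀ hN] at hgc
    linarith
  -- step B : the extension F of f from the complement of C
  have hCfin : C.Finite := Set.toFinite C
  set K : Finset (Fin d → Bool) := hCfin.toFinset with hK
  have hKcard : (K.card : ℝ) = (C.ncard : ℝ) := by
    rw [Set.ncard_eq_toFinset_card _ hCfin]
  have hKmem : ∀ x, x ∈ K ↔ x ∈ C := fun x => Set.Finite.mem_toFinset hCfin
  set T : Finset (Fin d → Bool) := Kᶜ with hTdef
  have hTmem : ∀ x : Fin d → Bool, x ∈ T ↔ x ∉ C := by
    intro x; rw [hTdef, Finset.mem_compl, hKmem]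
  have hT : T.Nonempty := by
    rw [← Finset.card_pos, hTdef, Finset.card_compl]
    have hcard' : Fintype.card (Fin d → Bool) = 2 ^ d := by
      simp [Fintype.card_fun]
    have hKlt : K.card < Fintype.card (Fin d → Bool) := by
      rw [hcard']
      have : (K.card : ℝ) < 2 ^ d := by nlinarith
      exact_mod_cast this
    omega
  set F : (Fin d → Bool) → ℝ :=
    fun x => T.inf' hT (fun y => f y + (hammingDist x y : ℝ)) with hF
  have hFle : ∀ x z : Fin d → Bool, F x ≤ F z + (hammingDist x z : ℝ) := by
    intro x z
    obtain ⟨y0, hy0, hy0e⟩ := T.exists_mem_eq_inf' hT (fun y => f y + (hammingDist z y : ℝ))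
    have h1 : F x ≤ f y0 + (hammingDist x y0 : ℝ) := Finset.inf'_le _ hy0
    have h2 : (hammingDist x y0 : ℝ) ≤ (hammingDist x z : ℝ) + (hammingDist z y0 : ℝ) := by
      exact_mod_cast hammingDist_triangle x z y0
    have h3 : F z = f y0 + (hammingDist z y0 : ℝ) := hy0e
    linarith
  have hFL : ∀ x z : Fin d → Bool, |F x - F z| ≤ (hammingDist x z : ℝ) := by
    intro x z
    rw [abs_sub_le_iff]
    constructor
    · have := hFle x z; linarith
    · have := hFle z x
      rw [hammingDist_comm z x] at this
      linarith
  -- f is "Lipschitz" outside C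
  have hno : ∀ x y : Fin d → Bool, x ∉ C → y ∉ C →
      |f x - f y| ≤ (hammingDist x y : ℝ) := by
    intro x y hx hy
    by_contra hcon
    push_neg at hcon
    rcases lt_trichotomy (f x) (f y) with h | h | h
    · rcases hcover x y (by linarith) h with h' | h' <;> tauto
    · rw [h, sub_self, abs_zero] at hcon
      exact absurd hcon (not_lt.2 (Nat.cast_nonneg _))
    · have hv : |f y - f x| - (hammingDist y x : ℝ) > 0 := by
        rw [abs_sub_comm, hammingDist_comm]; linarith
      rcases hcover y x hv h with h' | h' <;> tauto
  have hFeq : ∀ x : Fin d → Bool, x ∉ C → F x = f x := by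
    intro x hx
    apply le_antisymm
    · have h1 : F x ≤ f x + (hammingDist x x : ℝ) :=
        Finset.inf'_le _ ((hTmem x).2 hx)
      simpa using h1
    · apply Finset.le_inf'
      intro y hy
      have := hno x y hx ((hTmem y).1 hy)
      have h2 := le_abs_self (f x - f y)
      linarith
  -- step C : concentration of F
  set μ : ℝ := (∑ z : Fin d → Bool, F z) / 2 ^ d with hμ
  have hεd : 1 < (d : ℝ) / ε := by
    rw [lt_div_iff₀ hε0]; nlinarith
  have hlog : 0 < Real.log ((d : ℝ) / ε) := Real.log_pos hεd
  have hsq : s ^ 2 = d * Real.log ((d : ℝ) / ε) := by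
    rw [hs_def]; exact Real.sq_sqrt (by positivity)
  have hs : 0 < s := by
    rw [hs_def]; exact Real.sqrt_pos.2 (by positivity)
  set A : Finset (Fin d → Bool) := Finset.univ.filter (fun x => s < |F x - μ|) with hAdef
  have hexp : Real.exp (-(2 * s ^ 2 / d)) = (ε / d) ^ 2 := by
    have harg : -(2 * s ^ 2 / d) = 2 * Real.log (ε / d) := by
      rw [hsq]
      rw [show ε / (d:ℝ) = ((d:ℝ) / ε)⁻¹ by rw [inv_div], Real.log_inv]
      field_simp
    rw [harg]
    rw [show (2 : ℝ) * Real.log (ε / d) = Real.log ((ε / d) ^ 2) by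
      rw [Real.log_pow]; push_cast; ring]
    exact Real.exp_log (by positivity)
  have hAcard : (A.card : ℝ) ≤ 2 ^ d * (2 * (ε / d) ^ 2) := by
    have := chernoff_abs d hd0 F hFL s hs
    rw [hexp] at this
    exact this
  have hr : ε / (d : ℝ) ≤ 1 / 12 := by
    rw [div_le_iff₀ hd']; nlinarith
  have hr0 : 0 ≤ ε / (d : ℝ) := by positivity
  have h2r : 2 * (ε / (d:ℝ)) ^ 2 ≤ ε / d := by nlinarith
  -- step D : the bad set is contained in C ∪ A
  have hsubset : {p : Fin d → Bool |
        ({x : Fin d → Bool |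
            f x ∉ Set.Icc (f p - 2 * s) (f p + 2 * s)}.ncard : ℝ) / 2 ^ d >
        ((C ∩ {x : Fin d → Bool |
            f x ∉ Set.Icc (f p - 2 * s) (f p + 2 * s)}).ncard : ℝ) / 2 ^ d +
          ε / d} ⊆ C ∪ ↑A := by
    intro p hp
    by_contra hpc
    rw [Set.mem_union] at hpc
    push_neg at hpc
    obtain ⟨hpC, hpA⟩ := hpc
    have hpA' : ¬ (s < |F p - μ|) := by
      intro hcon
      exact hpA (Finset.mem_coe.2 (Finset.mem_filter.2 ⟨Finset.mem_univ _, hcon⟩))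
    push_neg at hpA'
    have hpb := abs_le.1 hpA'
    have hfp : F p = f p := hFeq p hpC
    set Out : Set (Fin d → Bool) :=
      {x : Fin d → Bool | f x ∉ Set.Icc (f p - 2 * s) (f p + 2 * s)} with hOut
    have hincl : Out ⊆ (C ∩ Out) ∪ ↑A := by
      intro x hx
      by_cases hxC : x ∈ C
      · exact Or.inl ⟨hxC, hx⟩
      · right
        have hfx : F x = f x := hFeq x hxC
        have hx' : f x ∉ Set.Icc (f p - 2 * s) (f p + 2 * s) := hx
        have hcases : f x < f p - 2 * s ∨ f p + 2 * s < f x := by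
          by_contra hcc
          push_neg at hcc
          exact hx' (Set.mem_Icc.2 ⟨hcc.1, hcc.2⟩)
        refine Finset.mem_coe.2 (Finset.mem_filter.2 ⟨Finset.mem_univ _, ?_⟩)
        rcases hcases with hc | hc
        · rw [lt_abs]
          right
          rw [hfx]
          linarith
        · rw [lt_abs]
          left
          rw [hfx]
          linarith
    have hcount : (Out.ncard : ℝ) ≤ ((C ∩ Out).ncard : ℝ) + (A.card : ℝ) := by
      have h1 : Out.ncard ≤ ((C ∩ Out) ∪ ↑A).ncard :=
        Set.ncard_le_ncard hincl (Set.toFinite _)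
      have h2 : ((C ∩ Out) ∪ (↑A : Set (Fin d → Bool))).ncard ≤
          (C ∩ Out).ncard + (↑A : Set (Fin d → Bool)).ncard :=
        Set.ncard_union_le _ _
      have h3 : (↑A : Set (Fin d → Bool)).ncard = A.card := Set.ncard_coe_finset A
      have := (h1.trans h2)
      rw [h3] at this
      exact_mod_cast this
    have hfinal : (Out.ncard : ℝ) / 2 ^ d ≤ ((C ∩ Out).ncard : ℝ) / 2 ^ d + ε / d := by
      have hA2 : (A.card : ℝ) ≤ 2 ^ d * (ε / d) := by
        have := mul_le_mul_of_nonneg_left h2r hN.le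
        linarith
      have h4 : (Out.ncard : ℝ) ≤ ((C ∩ Out).ncard : ℝ) + (ε / d) * 2 ^ d := by
        linarith
      have h5 : (Out.ncard : ℝ) / 2 ^ d ≤
          (((C ∩ Out).ncard : ℝ) + (ε / d) * 2 ^ d) / 2 ^ d := by gcongr
      have heq : (((C ∩ Out).ncard : ℝ) + (ε / d) * 2 ^ d) / 2 ^ d
          = ((C ∩ Out).ncard : ℝ) / 2 ^ d + ε / d := by
        rw [add_div, mul_div_cancel_right₀ _ hN.ne']
      rw [heq] at h5
      exact h5
    rw [Set.mem_setOf_eq] at hp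
    exact absurd hfinal (not_le.2 hp)
  -- conclusion
  have hfin1 : ({p : Fin d → Bool |
        ({x : Fin d → Bool |
            f x ∉ Set.Icc (f p - 2 * s) (f p + 2 * s)}.ncard : ℝ) / 2 ^ d >
        ((C ∩ {x : Fin d → Bool |
            f x ∉ Set.Icc (f p - 2 * s) (f p + 2 * s)}).ncard : ℝ) / 2 ^ d +
          ε / d}.ncard : ℝ) ≤ (C.ncard : ℝ) + (A.card : ℝ) := by
    have h1 := Set.ncard_le_ncard hsubset (Set.toFinite _)
    have h2 := Set.ncard_union_le C (↑A : Set (Fin d → Bool))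
    have h3 : (↑A : Set (Fin d → Bool)).ncard = A.card := Set.ncard_coe_finset A
    have := h1.trans h2
    rw [h3] at this
    exact_mod_cast this
  rw [div_le_iff₀ hN]
  have hkey : ε + 2 * (ε / (d:ℝ)) ^ 2 ≤ 5 / 12 := by nlinarith
  have hprod := mul_le_mul_of_nonneg_right hkey hN.le
  linarith
end
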